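/- arXiv:2604.23246 — 2 statements merged into one kernel-verified Lean document; each statement's English description precedes it below -/
import Mathlib

section
/- Fix h ∈ ℂ^K and a binary vector α ∈ {0,1}^K with at least one coordinate equal to 1, and let S be the set of indices k with α_k = 1. Write c = ∑_k α_k h_k. If there exists k ∈ S such that Re(c · conj(h_k)) < |c|² / |S|, then there exists a feasible β ∈ [0,1]^K, β ≠ 0, with |∑_k β_k h_k|² / ∑_k β_k² > |c|² / |S|. -/
set_option maxHeartbeats 1000000 in


theorem stmt_5 (K : ℕ) (h : Fin K → ℂ) (α : Fin K → ℝ)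
    (hbin : ∀ k, α k = 0 ∨ α k = 1)
    (S : Finset (Fin K)) (hS : ∀ k, k ∈ S ↔ α k = 1) (hne : S.Nonempty)
    (c : ℂ) (hc : c = ∑ k, (α k : ℂ) * h k)
    (hex : ∃ k ∈ S, (c * (starRingEnd ℂ) (h k)).re <
      ‖c‖ ^ 2 / (S.card : ℝ)) :
    ∃ β : Fin K → ℝ, (∀ k, β k ∈ Set.Icc (0 : ℝ) 1) ∧ β ≠ 0 ∧
      ‖∑ k, (β k : ℂ) * h k‖ ^ 2 / ∑ k, β k ^ 2 >
        ‖c‖ ^ 2 / (S.card : ℝ) := by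
  obtain ⟨k₀, hk₀S, hk₀⟩ := hex
  have hα0 : α k₀ = 1 := (hS k₀).1 hk₀S
  set n : ℝ := (S.card : ℝ) with hn
  have hn1 : (1 : ℝ) ≤ n := by
    have h1 : 1 ≤ S.card := Finset.card_pos.mpr hne
    rw [hn]
    exact_mod_cast h1
  have hnpos : (0 : ℝ) < n := lt_of_lt_of_le one_pos hn1
  set a : ℝ := ‖c‖ ^ 2 with ha
  set r : ℝ := (c * (starRingEnd ℂ) (h k₀)).re with hr
  set b : ℝ := ‖h k₀‖ ^ 2 with hb
  have hra : r * n < a := (lt_div_iff₀ hnpos).1 hk₀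
  set A : ℝ := 2 * (a - n * r) with hA
  set B : ℝ := n * b - a with hB
  have hApos : 0 < A := by rw [hA]; nlinarith
  set D : ℝ := A + |B| + 1 with hD
  have hDpos : 0 < D := by positivity
  set τ : ℝ := A / (2 * D) with hτ
  have hτpos : 0 < τ := by positivity
  have hτlt : τ < 1 := by
    rw [hτ, div_lt_one (by positivity)]
    have : |B| ≥ 0 := abs_nonneg B
    nlinarith
  have hAτB : 0 < A + τ * B := by
    have h1 : τ * |B| ≤ A / 2 := by
      rw [hτ, div_mul_eq_mul_div, div_le_div_iff₀ (by positivity) two_pos]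
      have hBle : |B| ≤ D := by rw [hD]; nlinarith [abs_nonneg B]
      nlinarith [abs_nonneg B]
    have h2 : -(τ * |B|) ≤ τ * B := by
      have := neg_abs_le B
      nlinarith
    linarith
  -- define β
  set β : Fin K → ℝ := Function.update α k₀ (1 - τ) with hβ
  refine ⟨β, ?_, ?_, ?_⟩
  · intro k
    by_cases hk : k = k₀
    · subst hk
      simp [hβ, Function.update_self]
      constructor <;> linarith
    · simp [hβ, Function.update_of_ne hk]
      rcases hbin k with h0 | h0 <;> simp [h0]
  · intro h0
    have : β k₀ = 0 := congrFun h0 k₀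
    rw [hβ, Function.update_self] at this
    linarith
  · -- sums
    have hsum1 : ∑ k, (β k : ℂ) * h k = c - (τ : ℂ) * h k₀ := by
      have key : ∑ k, ((β k : ℂ) * h k - (α k : ℂ) * h k) = -(τ : ℂ) * h k₀ := by
        rw [Finset.sum_eq_single k₀]
        · rw [hβ, Function.update_self, hα0]; push_cast; ring
        · intro k _ hk; rw [hβ, Function.update_of_ne hk]; ring
        · intro hk; exact absurd (Finset.mem_univ k₀) hk
      have := Finset.sum_sub_distrib (f := fun k => (β k : ℂ) * h k)
        (g := fun k => (α k : ℂ) * h k) (s := Finset.univ)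
      rw [this] at key
      rw [← hc] at key
      linear_combination key + 0
    have hsumα : ∑ k, α k ^ 2 = n := by
      have h1 : ∀ k, α k ^ 2 = α k := by
        intro k; rcases hbin k with h0 | h0 <;> simp [h0]
      simp only [h1]
      rw [hn]
      rw [← Finset.sum_subset (Finset.subset_univ S)]
      · rw [Finset.sum_congr rfl (fun k hk => (hS k).1 hk)]
        simp
      · intro k _ hk
        rcases hbin k with h0 | h0
        · exact h0
        · exact absurd ((hS k).2 h0) hk
    have hsum2 : ∑ k, β k ^ 2 = n - 2 * τ + τ ^ 2 := by
      have key : ∑ k, (β k ^ 2 - α k ^ 2) = (1 - τ) ^ 2 - 1 := by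
        rw [Finset.sum_eq_single k₀]
        · rw [hβ, Function.update_self, hα0]; ring
        · intro k _ hk; rw [hβ, Function.update_of_ne hk]; ring
        · intro hk; exact absurd (Finset.mem_univ k₀) hk
      rw [Finset.sum_sub_distrib, hsumα] at key
      linarith [key, sq_nonneg (1 - τ)]
    have hYpos : 0 < n - 2 * τ + τ ^ 2 := by nlinarith [sq_nonneg (1 - τ)]
    have hX : ‖c - (τ : ℂ) * h k₀‖ ^ 2 = a - 2 * τ * r + τ ^ 2 * b := by
      rw [ha, hb, hr]
      simp only [Complex.sq_norm, Complex.normSq_apply, Complex.sub_re, Complex.sub_im,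
        Complex.mul_re, Complex.mul_im, Complex.ofReal_re, Complex.ofReal_im,
        Complex.conj_re, Complex.conj_im]
      ring
    rw [hsum1, hsum2, hX, gt_iff_lt, div_lt_div_iff₀ hnpos hYpos]
    have hkey : (a - 2 * τ * r + τ ^ 2 * b) * n - a * (n - 2 * τ + τ ^ 2)
        = τ * (A + τ * B) := by rw [hA, hB]; ring
    nlinarith [mul_pos hτpos hAτB]
end

section
/- Fix h ∈ ℂ^K and a binary vector α ∈ {0,1}^K with at least one coordinate equal to 1, and write c = ∑_k α_k h_k. If there exists an index k with α_k = 0 such that Re(c · conj(h_k)) > 0, then there exists β ∈ [0,1]^K, β ≠ 0, with |∑_k β_k h_k|² / ∑_k β_k² > |c|² / ∑_k α_k². -/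
theorem stmt_6 (K : ℕ) (h : Fin K → ℂ) (α : Fin K → ℝ)
    (hbin : ∀ k, α k = 0 ∨ α k = 1)
    (hne : ∃ k, α k = 1)
    (c : ℂ) (hc : c = ∑ k, (α k : ℂ) * h k)
    (hex : ∃ k, α k = 0 ∧ 0 < (c * (starRingEnd ℂ) (h k)).re) :
    ∃ β : Fin K → ℝ, (∀ k, β k ∈ Set.Icc (0 : ℝ) 1) ∧ β ≠ 0 ∧
      ‖∑ k, (β k : ℂ) * h k‖ ^ 2 / ∑ k, β k ^ 2 >
        ‖c‖ ^ 2 / ∑ k, α k ^ 2 := by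
  obtain ⟨k, hαk, hR⟩ := hex
  obtain ⟨j, hj⟩ := hne
  set n : ℝ := ∑ i, α i ^ 2 with hn
  set R : ℝ := (c * (starRingEnd ℂ) (h k)).re with hRdef
  have hn1 : (1 : ℝ) ≤ n := by
    have : α j ^ 2 = 1 := by rw [hj]; ring
    calc (1:ℝ) = α j ^ 2 := this.symm
      _ ≤ n := Finset.single_le_sum (f := fun i => α i ^ 2)
          (fun i _ => sq_nonneg _) (Finset.mem_univ j)
  have hnpos : (0:ℝ) < n := lt_of_lt_of_le one_pos hn1
  set τ : ℝ := min 1 (R * n / (‖c‖ ^ 2 + 1)) with hτdef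
  have hca : (0:ℝ) < ‖c‖ ^ 2 + 1 := by positivity
  have hτpos : 0 < τ := lt_min one_pos (by positivity)
  have hτ1 : τ ≤ 1 := min_le_left _ _
  have hτle : τ * (‖c‖ ^ 2 + 1) ≤ R * n := by
    have := min_le_right 1 (R * n / (‖c‖ ^ 2 + 1))
    calc τ * (‖c‖ ^ 2 + 1)
        ≤ (R * n / (‖c‖ ^ 2 + 1)) * (‖c‖ ^ 2 + 1) := by
          apply mul_le_mul_of_nonneg_right this (le_of_lt hca)
      _ = R * n := by field_simp
  refine ⟨fun i => α i + if i = k then τ else 0, ?_, ?_, ?_⟩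
  · intro i
    by_cases hik : i = k
    · subst hik
      simp [hαk, Set.mem_Icc, le_of_lt hτpos, hτ1]
    · simp only [hik, if_false, add_zero, Set.mem_Icc]
      rcases hbin i with h0 | h0 <;> simp [h0]
  · intro h0
    have := congrFun h0 k
    simp [hαk] at this
    exact (ne_of_gt hτpos) this
  · have hsum : ∑ i, ((α i + if i = k then τ else 0 : ℝ) : ℂ) * h i
        = c + (τ : ℂ) * h k := by
      rw [hc]
      push_cast
      rw [Finset.sum_congr rfl (fun i _ => add_mul _ _ (h i)), Finset.sum_add_distrib]
      congr 1
      simp [apply_ite (fun x : ℝ => (x : ℂ)), ite_mul]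
    have hsq : ∑ i, (α i + if i = k then τ else 0 : ℝ) ^ 2 = n + τ ^ 2 := by
      have : ∀ i, (α i + if i = k then τ else 0 : ℝ) ^ 2
          = α i ^ 2 + (if i = k then 2 * α i * τ + τ ^ 2 else 0) := by
        intro i; by_cases hik : i = k <;> simp [hik] <;> ring
      rw [Finset.sum_congr rfl (fun i _ => this i), Finset.sum_add_distrib]
      simp [hαk, hn]
    rw [hsum, hsq]
    have hexp : ‖c + (τ : ℂ) * h k‖ ^ 2
        = ‖c‖ ^ 2 + 2 * τ * R + τ ^ 2 * ‖h k‖ ^ 2 := by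
      rw [Complex.sq_norm, Complex.sq_norm, Complex.sq_norm, Complex.normSq_add,
        Complex.normSq_mul, Complex.normSq_ofReal]
      have h1 : (starRingEnd ℂ) ((τ : ℂ) * h k) = (τ : ℂ) * (starRingEnd ℂ) (h k) := by
        simp [Complex.conj_ofReal]
      have h2 : (c * ((τ : ℂ) * (starRingEnd ℂ) (h k))).re = τ * R := by
        rw [mul_left_comm, Complex.re_ofReal_mul, hRdef]
      rw [h1, h2]; ring
    rw [gt_iff_lt, div_lt_div_iff₀ hnpos (by positivity), hexp]
    nlinarith [mul_le_mul_of_nonneg_left hτle (le_of_lt hτpos),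
      mul_pos hτpos (mul_pos hR hnpos), sq_nonneg τ,
      mul_nonneg (mul_nonneg (sq_nonneg τ) (sq_nonneg (‖h k‖))) (le_of_lt hnpos)]
end
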